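/- Every orientable twist vector is in the orbit of (0,0,0) under the group of affine maps generated by σ₁, σ₂, σ₃: if (a,b,c) ∈ ℤ³, or a, b, c are all half-odd-integers, then there is a finite composition of the maps σ₁, σ₂, σ₃ and their inverses sending (0,0,0) to (a,b,c). (Hint from the paper: σ₁σ₂σ₁·(x,y,z) = (z+1/2, y+1/2, x+1/2), reducing the half-odd-integer case to the integer case.) -/

import Mathlib

/-- The action of a circular braid generator (`b = true`) or its inverse (`b = false`)
on twist vectors in ℚ³. -/
def gen : Fin 3 × Bool → (ℚ × ℚ × ℚ → ℚ × ℚ × ℚ)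
  | (0, true)  => fun v => (v.2.1 + 1/2, v.1 + 1/2, v.2.2 - 1/2)
  | (1, true)  => fun v => (v.1 - 1/2, v.2.2 + 1/2, v.2.1 + 1/2)
  | (2, true)  => fun v => (v.2.2 + 1/2, v.2.1 - 1/2, v.1 + 1/2)
  | (0, false) => fun v => (v.2.1 - 1/2, v.1 - 1/2, v.2.2 + 1/2)
  | (1, false) => fun v => (v.1 + 1/2, v.2.2 - 1/2, v.2.1 - 1/2)
  | (2, false) => fun v => (v.2.2 - 1/2, v.2.1 + 1/2, v.1 - 1/2)

/-- Apply a word (list of generators and inverses, rightmost letter acting first). -/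
def applyWord (w : List (Fin 3 × Bool)) (v : ℚ × ℚ × ℚ) : ℚ × ℚ × ℚ :=
  w.foldr (fun g u => gen g u) v

/-- `x` is an integer. -/
def IsInt (x : ℚ) : Prop := ∃ n : ℤ, x = n

/-- `x` is a half-odd-integer, i.e. an element of ℤ + 1/2. -/
def IsHalfOdd (x : ℚ) : Prop := ∃ n : ℤ, x = n + 1/2

/-- A twist vector is orientable if its entries do not mix integers and
half-odd-integers. -/
def Orientable (v : ℚ × ℚ × ℚ) : Prop :=
  (IsInt v.1 ∧ IsInt v.2.1 ∧ IsInt v.2.2) ∨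
  (IsHalfOdd v.1 ∧ IsHalfOdd v.2.1 ∧ IsHalfOdd v.2.2)

/-!
The squares σᵢ² are the translations by `(1,1,-1)`, `(-1,1,1)` and `(1,-1,1)`, which span the
index-4 lattice of integer vectors with entries of equal parity. Its four cosets in `ℤ³` are
represented by `0`, `σ₂⁻¹σ₁·0 = (1,-1,0)`, `σ₁⁻¹σ₂·0 = (0,-1,1)` and `σ₂⁻¹σ₃·0 = (1,0,-1)`,
so every integer vector is reachable. Finally `σ₁σ₂σ₁·(x,y,z) = (z+1/2, y+1/2, x+1/2)` carries
the integer vectors onto the half-odd-integer ones.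
-/

def Reachable (v : ℚ × ℚ × ℚ) : Prop :=
  ∃ w : List (Fin 3 × Bool), applyWord w (0, 0, 0) = v

lemma applyWord_append (u w : List (Fin 3 × Bool)) (v : ℚ × ℚ × ℚ) :
    applyWord (u ++ w) v = applyWord u (applyWord w v) :=
  List.foldr_append

lemma Reachable.applyWord {v : ℚ × ℚ × ℚ} (h : Reachable v) (u : List (Fin 3 × Bool)) :
    Reachable (applyWord u v) := by
  obtain ⟨w, rfl⟩ := h
  exact ⟨u ++ w, applyWord_append u w _⟩

lemma reachable_add_zsmul {u u' : List (Fin 3 × Bool)} {t : ℚ × ℚ × ℚ}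
    (hu : ∀ v, applyWord u v = v + t) (hu' : ∀ v, applyWord u' v = v - t)
    {v : ℚ × ℚ × ℚ} (h : Reachable v) (k : ℤ) : Reachable (v + k • t) := by
  induction k using Int.induction_on with
  | zero => simpa using h
  | succ k ih =>
    simpa only [hu, Int.cast_add, Int.cast_one, add_smul, one_smul, add_assoc] using ih.applyWord u
  | pred k ih =>
    simpa only [hu', Int.cast_sub, Int.cast_one, sub_smul, one_smul, add_sub_assoc] using
      ih.applyWord u'

def squareShift : Fin 3 → ℚ × ℚ × ℚ
  | 0 => (1, 1, -1)
  | 1 => (-1, 1, 1)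
  | 2 => (1, -1, 1)

lemma applyWord_square (i : Fin 3) (v : ℚ × ℚ × ℚ) :
    applyWord [(i, true), (i, true)] v = v + squareShift i := by
  fin_cases i <;> ext <;> simp [applyWord, gen, squareShift] <;> ring

lemma applyWord_inv_square (i : Fin 3) (v : ℚ × ℚ × ℚ) :
    applyWord [(i, false), (i, false)] v = v - squareShift i := by
  fin_cases i <;> ext <;> simp [applyWord, gen, squareShift] <;> ring

lemma Reachable.add_intCast_of_even {v : ℚ × ℚ × ℚ} (h : Reachable v) {a b c : ℤ}
    (hab : Even (a + b)) (hbc : Even (b + c)) : Reachable (v + ((a : ℚ), (b : ℚ), (c : ℚ))) := by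
  obtain ⟨p, hp⟩ := hab
  obtain ⟨q, hq⟩ := hbc
  have hp' : (a : ℚ) + b = p + p := by exact_mod_cast hp
  have hq' : (b : ℚ) + c = q + q := by exact_mod_cast hq
  have h₀ := reachable_add_zsmul (applyWord_square 0) (applyWord_inv_square 0) h p
  have h₁ := reachable_add_zsmul (applyWord_square 1) (applyWord_inv_square 1) h₀ q
  have h₂ := reachable_add_zsmul (applyWord_square 2) (applyWord_inv_square 2) h₁ (p + q - b)
  convert h₂ using 1
  simp only [squareShift, Prod.ext_iff, Prod.fst_add, Prod.snd_add, Prod.smul_mk, zsmul_eq_mul]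
  push_cast
  exact ⟨by linear_combination hp', by ring, by linear_combination hq'⟩

lemma reachable_intCast_of_parity {x y z : ℤ} (h : Reachable ((x : ℚ), (y : ℚ), (z : ℚ)))
    {a b c : ℤ} (hab : (a + b) % 2 = (x + y) % 2) (hbc : (b + c) % 2 = (y + z) % 2) :
    Reachable ((a : ℚ), (b : ℚ), (c : ℚ)) := by
  have := h.add_intCast_of_even (a := a - x) (b := b - y) (c := c - z)
    (Int.even_iff.mpr (by omega)) (Int.even_iff.mpr (by omega))
  simpa using this

lemma reachable_intCast (a b c : ℤ) : Reachable ((a : ℚ), (b : ℚ), (c : ℚ)) := by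
  rcases Int.emod_two_eq_zero_or_one (a + b) with hab | hab <;>
    rcases Int.emod_two_eq_zero_or_one (b + c) with hbc | hbc
  · exact reachable_intCast_of_parity (x := 0) (y := 0) (z := 0) ⟨[], by simp [applyWord]⟩
      (by omega) (by omega)
  · exact reachable_intCast_of_parity (x := 1) (y := -1) (z := 0)
      ⟨[(1, false), (0, true)], by norm_num [applyWord, gen]⟩ (by omega) (by omega)
  · exact reachable_intCast_of_parity (x := 0) (y := -1) (z := 1)
      ⟨[(0, false), (1, true)], by norm_num [applyWord, gen]⟩ (by omega) (by omega)
  · exact reachable_intCast_of_parity (x := 1) (y := 0) (z := -1)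
      ⟨[(1, false), (2, true)], by norm_num [applyWord, gen]⟩ (by omega) (by omega)

lemma applyWord_reverse_add_half (v : ℚ × ℚ × ℚ) :
    applyWord [(0, true), (1, true), (0, true)] v = (v.2.2 + 1/2, v.2.1 + 1/2, v.1 + 1/2) := by
  simp only [applyWord, List.foldr, gen, Prod.ext_iff]
  norm_num

theorem orientable_twist_vectors_reachable (v : ℚ × ℚ × ℚ) (h : Orientable v) :
    ∃ w : List (Fin 3 × Bool), applyWord w (0, 0, 0) = v := by
  obtain ⟨x, y, z⟩ := v
  rcases h with ⟨⟨a, rfl⟩, ⟨b, rfl⟩, ⟨c, rfl⟩⟩ | ⟨⟨a, rfl⟩, ⟨b, rfl⟩, ⟨c, rfl⟩⟩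
  · exact reachable_intCast a b c
  · have h := (reachable_intCast c b a).applyWord [(0, true), (1, true), (0, true)]
    rwa [applyWord_reverse_add_half] at h
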